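/- Let 0 < Δ < 1/2. Define on (0,1) the functions G₁(z) = (1−z)^{−Δ} Σ_{n=0}^∞ [(−2Δ)_n ((1−2Δ)/3)_n / (((2−4Δ)/3)_n n!)] z^n and G₂(z) = z^{(1+4Δ)/3} (1−z)^{−Δ} Σ_{n=0}^∞ [((1−2Δ)/3)_n ((2+2Δ)/3)_n / (((4+4Δ)/3)_n n!)] z^n. Then both G₁ and G₂ satisfy the second-order BPZ differential equation (3/2) z (z−1)² G''(z) + (z−1)[(2−Δ)z + 2Δ − 1] G'(z) − (1/2) Δ(Δ+1) z G(z) = 0 for all z in (0,1). -/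

import Mathlib

/-- Pochhammer symbol `(x)_m = x(x+1)⋯(x+m−1)`, with `(x)_0 = 1`. -/
noncomputable def poch (x : ℝ) : ℕ → ℝ
  | 0 => 1
  | m + 1 => poch x m * (x + m)

/-- Holomorphic Virasoro identity block `G^{σσσσ}_{(1,1)}(z)` of `⟨σσσσ⟩`. -/
noncomputable def G1 (Δ z : ℝ) : ℝ :=
  (1 - z) ^ (-Δ) *
    ∑' n : ℕ,
      (poch (-2*Δ) n * poch ((1 - 2*Δ)/3) n
        / (poch ((2 - 4*Δ)/3) n * (n.factorial : ℝ))) * z ^ n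

/-- Holomorphic Virasoro block `G^{σσσσ}_{(1,3)}(z)` of `ε = φ_{1,3}` in `⟨σσσσ⟩`. -/
noncomputable def G2 (Δ z : ℝ) : ℝ :=
  z ^ ((1 + 4*Δ)/3) * (1 - z) ^ (-Δ) *
    ∑' n : ℕ,
      (poch ((1 - 2*Δ)/3) n * poch ((2 + 2*Δ)/3) n
        / (poch ((4 + 4*Δ)/3) n * (n.factorial : ℝ))) * z ^ n

/-!
Each block is `x ^ s * (1 - x) ^ (-Δ) * ₂F₁(a, b; c; x)` with `s = 0` or `s = (1 + 4Δ)/3`.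
Conjugating the BPZ operator by `x ^ s * (1 - x) ^ (-Δ)` turns it into `(3/2) (1 - x)` times the
hypergeometric operator `x (1 - x) ∂² + (c - (a + b + 1) x) ∂ - a b`, which annihilates `₂F₁`
because its coefficients obey `(n + 1)(n + c) d (n + 1) = (n + a)(n + b) d n`. Termwise
differentiation is legitimate on `(-1, 1)` since the coefficients are bounded by `1`, from
`|(a)_n| ≤ n!` and `(b)_n ≤ (c)_n`.
-/

open Filter Set Asymptotics Topology

theorem poch_pos {x : ℝ} (hx : 0 < x) : ∀ n, 0 < poch x n
  | 0 => one_pos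
  | n + 1 => mul_pos (poch_pos hx n) (by positivity)

theorem poch_le_poch {x y : ℝ} (hx : 0 < x) (hxy : x ≤ y) : ∀ n, poch x n ≤ poch y n
  | 0 => le_rfl
  | n + 1 => mul_le_mul (poch_le_poch hx hxy n) (by linarith) (by positivity)
      ((poch_pos hx n).le.trans (poch_le_poch hx hxy n))

theorem abs_poch_le_factorial {x : ℝ} (hx : |x| ≤ 1) : ∀ n, |poch x n| ≤ n.factorial
  | 0 => by simp [poch]
  | n + 1 => by
    rw [poch, abs_mul, Nat.factorial_succ, Nat.cast_mul, mul_comm ((n + 1 : ℕ) : ℝ)]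
    refine mul_le_mul (abs_poch_le_factorial hx n) ?_ (abs_nonneg _) (by positivity)
    calc |x + n| ≤ |x| + n := (abs_add_le _ _).trans (by rw [Nat.abs_cast])
      _ ≤ ((n + 1 : ℕ) : ℝ) := by push_cast; linarith

theorem poch_ne_zero {c : ℝ} (hc : ∀ n : ℕ, c + n ≠ 0) : ∀ n, poch c n ≠ 0
  | 0 => one_ne_zero
  | n + 1 => mul_ne_zero (poch_ne_zero hc n) (hc n)

noncomputable def hypergeomCoeff (a b c : ℝ) (n : ℕ) : ℝ :=
  poch a n * poch b n / (poch c n * n.factorial)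

theorem hypergeomCoeff_succ (a b : ℝ) {c : ℝ} (hc : ∀ n : ℕ, c + n ≠ 0) (n : ℕ) :
    ((n : ℝ) + 1) * (n + c) * hypergeomCoeff a b c (n + 1)
      = (n + a) * (n + b) * hypergeomCoeff a b c n := by
  have hpoch := poch_ne_zero hc n
  have hcn := hc n
  have hfac : (n.factorial : ℝ) ≠ 0 := by positivity
  simp only [hypergeomCoeff, poch, Nat.factorial_succ, Nat.cast_mul, Nat.cast_succ]
  field_simp
  ring

theorem abs_hypergeomCoeff_le_one {a b c : ℝ} (ha : |a| ≤ 1) (hb : 0 < b) (hbc : b ≤ c) (n : ℕ) :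
    |hypergeomCoeff a b c n| ≤ 1 := by
  have hbn := poch_pos hb n
  have hcn := poch_pos (hb.trans_le hbc) n
  rw [hypergeomCoeff, abs_div, abs_mul, abs_mul, abs_of_pos hbn, abs_of_pos hcn, Nat.abs_cast,
    div_le_one (by positivity), mul_comm (poch c n)]
  exact mul_le_mul (abs_poch_le_factorial ha n) (poch_le_poch hb hbc n) hbn.le (by positivity)

theorem isBigO_natCast_add (t : ℝ) :
    (fun n : ℕ => (n : ℝ) + t) =O[atTop] fun n => (n : ℝ) := by
  refine .of_bound (1 + |t|) ?_
  filter_upwards [eventually_ge_atTop 1] with n hn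
  have hn' : (1 : ℝ) ≤ n := by exact_mod_cast hn
  rw [Real.norm_eq_abs, Real.norm_eq_abs, Nat.abs_cast]
  calc |(n : ℝ) + t| ≤ n + |t| := (abs_add_le _ _).trans (by rw [Nat.abs_cast])
    _ ≤ (1 + |t|) * n := by nlinarith [abs_nonneg t]

def PolyBounded (d : ℕ → ℝ) : Prop := ∃ k : ℕ, d =O[atTop] fun n => (n : ℝ) ^ k

namespace PolyBounded

variable {d e : ℕ → ℝ}

theorem of_abs_le {C : ℝ} (h : ∀ n, |d n| ≤ C) : PolyBounded d :=
  ⟨0, .of_bound C (.of_forall fun n => by simpa using h n)⟩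

theorem natCast : PolyBounded fun n => (n : ℝ) :=
  ⟨1, by simpa using isBigO_refl _ _⟩

theorem natCast_add (t : ℝ) : PolyBounded fun n => (n : ℝ) + t :=
  ⟨1, by simpa using isBigO_natCast_add t⟩

theorem mul (hd : PolyBounded d) (he : PolyBounded e) : PolyBounded fun n => d n * e n := by
  obtain ⟨k, hk⟩ := hd
  obtain ⟨l, hl⟩ := he
  exact ⟨k + l, by simpa only [pow_add] using hk.mul hl⟩

theorem const_mul (hd : PolyBounded d) (c : ℝ) : PolyBounded fun n => c * d n :=
  let ⟨k, hk⟩ := hd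
  ⟨k, hk.const_mul_left c⟩

theorem comp_succ (hd : PolyBounded d) : PolyBounded fun n => d (n + 1) := by
  obtain ⟨k, hk⟩ := hd
  refine ⟨k, (hk.comp_tendsto (tendsto_add_atTop_nat 1)).trans ?_⟩
  simpa [Function.comp_def] using (isBigO_natCast_add 1).pow k

theorem summable (hd : PolyBounded d) {z : ℝ} (hz : |z| < 1) :
    Summable fun n => d n * z ^ n := by
  obtain ⟨k, hk⟩ := hd
  refine summable_of_isBigO_nat (summable_pow_mul_geometric_of_norm_lt_one k hz) ?_
  exact hk.mul (isBigO_refl _ _)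

end PolyBounded

noncomputable def psum (d : ℕ → ℝ) (x : ℝ) : ℝ := ∑' n, d n * x ^ n

def derivCoeff (d : ℕ → ℝ) (n : ℕ) : ℝ := ((n : ℝ) + 1) * d (n + 1)

theorem PolyBounded.derivCoeff {d : ℕ → ℝ} (hd : PolyBounded d) : PolyBounded (derivCoeff d) :=
  (natCast_add 1).mul hd.comp_succ

section psum

variable {d e : ℕ → ℝ} {z : ℝ}

theorem psum_add (hd : PolyBounded d) (he : PolyBounded e) (hz : |z| < 1) :
    psum (fun n => d n + e n) z = psum d z + psum e z := by
  simp only [psum, add_mul]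
  exact (hd.summable hz).tsum_add (he.summable hz)

theorem psum_const_mul (c : ℝ) : psum (fun n => c * d n) z = c * psum d z := by
  simp only [psum, mul_assoc, tsum_mul_left]

theorem psum_eq_add_tsum (hd : PolyBounded d) (hz : |z| < 1) :
    psum d z = d 0 + ∑' n, d (n + 1) * z ^ (n + 1) := by
  rw [psum, (hd.summable hz).tsum_eq_zero_add, pow_zero, mul_one]

theorem mul_psum_derivCoeff (hd : PolyBounded d) (hz : |z| < 1) :
    z * psum (derivCoeff d) z = psum (fun n => n * d n) z := by
  rw [psum_eq_add_tsum (PolyBounded.natCast.mul hd) hz, psum, ← tsum_mul_left]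
  simp only [derivCoeff, Nat.cast_zero, zero_mul, zero_add, Nat.cast_succ, pow_succ]
  congr 1 with n
  ring

theorem hasDerivAt_psum (hd : PolyBounded d) (hz : |z| < 1) :
    HasDerivAt (psum d) (psum (derivCoeff d) z) z := by
  obtain ⟨ρ, hzρ, hρ1⟩ := exists_between hz
  have hρ : |ρ| < 1 := by rwa [abs_of_pos ((abs_nonneg z).trans_lt hzρ)]
  rw [← Real.norm_eq_abs, ← dist_zero_right, ← Metric.mem_ball] at hzρ
  have hderiv : ∀ (n : ℕ) (y : ℝ), y ∈ Metric.ball (0 : ℝ) ρ →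
      HasDerivAt (fun x => d (n + 1) * x ^ (n + 1)) (derivCoeff d n * y ^ n) y := by
    intro n y _
    refine ((hasDerivAt_pow (n + 1) y).const_mul (d (n + 1))).congr_deriv ?_
    rw [derivCoeff, Nat.add_sub_cancel, Nat.cast_succ]
    ring
  have hbound : ∀ (n : ℕ) (y : ℝ), y ∈ Metric.ball (0 : ℝ) ρ →
      ‖derivCoeff d n * y ^ n‖ ≤ ‖derivCoeff d n * ρ ^ n‖ := by
    intro n y hy
    rw [Metric.mem_ball, dist_zero_right] at hy
    simp only [norm_mul, norm_pow]
    gcongr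
    exact hy.le.trans (le_abs_self ρ)
  have htail := hasDerivAt_tsum_of_isPreconnected ((hd.derivCoeff.summable hρ).norm)
    Metric.isOpen_ball (convex_ball 0 ρ).isPreconnected hderiv hbound hzρ
    ((summable_nat_add_iff 1).2 (hd.summable hz)) hzρ
  refine (htail.const_add (d 0)).congr_of_eventuallyEq ?_
  filter_upwards [Metric.isOpen_ball.mem_nhds hzρ] with x hx
  refine psum_eq_add_tsum hd ?_
  rw [Metric.mem_ball, dist_zero_right, Real.norm_eq_abs] at hx
  linarith

theorem psum_hypergeometric_ode {a b c : ℝ} (hd : PolyBounded d)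
    (hrec : ∀ n : ℕ, ((n : ℝ) + 1) * (n + c) * d (n + 1) = (n + a) * (n + b) * d n)
    (hz : |z| < 1) :
    z * (1 - z) * psum (derivCoeff (derivCoeff d)) z + (c - (a + b + 1) * z) * psum (derivCoeff d) z
      - a * b * psum d z = 0 := by
  have hd' := hd.derivCoeff
  have hF'' : z * psum (derivCoeff (derivCoeff d)) z + c * psum (derivCoeff d) z
      = psum (fun n => (n + a) * (n + b) * d n) z := by
    rw [mul_psum_derivCoeff hd' hz, ← psum_const_mul,
      ← psum_add (PolyBounded.natCast.mul hd') (hd'.const_mul c) hz]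
    congr 1 with n
    simp only [derivCoeff]
    linear_combination hrec n
  have hF' : z * psum (derivCoeff (derivCoeff d)) z + (a + b + 1) * psum (derivCoeff d) z
      = psum (derivCoeff fun n => (n + (a + b)) * d n) z := by
    rw [mul_psum_derivCoeff hd' hz, ← psum_const_mul,
      ← psum_add (PolyBounded.natCast.mul hd') (hd'.const_mul _) hz]
    congr 1 with n
    simp only [derivCoeff, Nat.cast_succ]
    ring
  have hF : z * (z * psum (derivCoeff (derivCoeff d)) z + (a + b + 1) * psum (derivCoeff d) z)
      + a * b * psum d z = psum (fun n => (n + a) * (n + b) * d n) z := by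
    rw [hF', mul_psum_derivCoeff ((PolyBounded.natCast_add _).mul hd) hz, ← psum_const_mul,
      ← psum_add (PolyBounded.natCast.mul ((PolyBounded.natCast_add _).mul hd)) (hd.const_mul _) hz]
    congr 1 with n
    ring
  linear_combination hF'' - hF

end psum

theorem deriv_deriv_mul_of_hasDerivAt {U : Set ℝ} (hU : IsOpen U) {p p' p'' f f' f'' : ℝ → ℝ}
    (hp : ∀ x ∈ U, HasDerivAt p (p' x) x) (hp' : ∀ x ∈ U, HasDerivAt p' (p'' x) x)
    (hf : ∀ x ∈ U, HasDerivAt f (f' x) x) (hf' : ∀ x ∈ U, HasDerivAt f' (f'' x) x)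
    {z : ℝ} (hz : z ∈ U) :
    deriv (deriv fun x => p x * f x) z = p'' z * f z + 2 * (p' z * f' z) + p z * f'' z := by
  have hderiv : deriv (fun x => p x * f x) =ᶠ[𝓝 z] fun x => p' x * f x + p x * f' x := by
    filter_upwards [hU.mem_nhds hz] with x hx
    exact ((hp x hx).mul (hf x hx)).deriv
  rw [hderiv.deriv_eq]
  exact (((hp' z hz).mul (hf z hz)).add ((hp z hz).mul (hf' z hz))).deriv.trans (by ring)

section prefactor

variable (s Δ : ℝ) {x : ℝ}

theorem hasDerivAt_rpow_mul_one_sub_rpow (hx : x ∈ Ioo 0 1) :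
    HasDerivAt (fun x => x ^ s * (1 - x) ^ (-Δ))
      (x ^ s * (1 - x) ^ (-Δ) * (s / x + Δ / (1 - x))) x := by
  have hx0 : x ≠ 0 := hx.1.ne'
  have hx1 : 1 - x ≠ 0 := (sub_pos.2 hx.2).ne'
  have h1 := Real.hasDerivAt_rpow_const (p := s) (Or.inl hx0)
  have h2 := ((Real.hasDerivAt_rpow_const (p := -Δ) (Or.inl hx1)).comp x
    ((hasDerivAt_id x).const_sub 1))
  refine (h1.mul h2).congr_deriv ?_
  rw [Function.comp_apply, Real.rpow_sub_one hx0, Real.rpow_sub_one hx1]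
  field_simp

theorem hasDerivAt_deriv_rpow_mul_one_sub_rpow (hx : x ∈ Ioo 0 1) :
    HasDerivAt (fun x => x ^ s * (1 - x) ^ (-Δ) * (s / x + Δ / (1 - x)))
      (x ^ s * (1 - x) ^ (-Δ) * ((s / x + Δ / (1 - x)) ^ 2 - s / x ^ 2 + Δ / (1 - x) ^ 2)) x := by
  have hx0 : x ≠ 0 := hx.1.ne'
  have hx1 : 1 - x ≠ 0 := (sub_pos.2 hx.2).ne'
  have hω : HasDerivAt (fun x => s / x + Δ / (1 - x)) (-s / x ^ 2 + Δ / (1 - x) ^ 2) x := by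
    have h1 := (hasDerivAt_const x s).fun_div (hasDerivAt_id x) hx0
    have h2 := (hasDerivAt_const x Δ).fun_div ((hasDerivAt_id x).const_sub 1) hx1
    refine (h1.add h2).congr_deriv ?_
    simp only [id]
    ring
  refine ((hasDerivAt_rpow_mul_one_sub_rpow s Δ hx).mul hω).congr_deriv ?_
  ring

end prefactor

noncomputable def bpzOperator (Δ : ℝ) (G : ℝ → ℝ) (z : ℝ) : ℝ :=
  (3 / 2) * z * (z - 1) ^ 2 * deriv (deriv G) z + (z - 1) * ((2 - Δ) * z + 2 * Δ - 1) * deriv G z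
    - (1 / 2) * Δ * (Δ + 1) * z * G z

/-- `hs` says that `s` is a local exponent at `0`; `hc`, `hab`, `hab'` match the remaining
coefficients of the conjugated BPZ operator with those of `(3/2) (1 - x)` times the hypergeometric
operator of `(a, b, c)`. -/
theorem bpzOperator_rpow_mul_one_sub_rpow_mul_psum {a b c s Δ : ℝ} {d : ℕ → ℝ}
    (hd : PolyBounded d)
    (hrec : ∀ n : ℕ, ((n : ℝ) + 1) * (n + c) * d (n + 1) = (n + a) * (n + b) * d n)
    (hs : s * (3 * s - 4 * Δ - 1) = 0) (hc : 3 * c = 6 * s + 2 - 4 * Δ)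
    (hab : 3 * (a + b) = 6 * s + 1 - 8 * Δ)
    (hab' : 3 * (a * b) = 3 * s ^ 2 + s - 8 * s * Δ + 4 * Δ ^ 2 - 2 * Δ)
    {z : ℝ} (hz : z ∈ Ioo 0 1) :
    bpzOperator Δ (fun x => x ^ s * (1 - x) ^ (-Δ) * psum d x) z = 0 := by
  have hunit : ∀ x ∈ Ioo (0 : ℝ) 1, |x| < 1 := fun x hx => by
    rw [abs_of_pos hx.1]; exact hx.2
  have hz0 : z ≠ 0 := hz.1.ne'
  have hz1 : 1 - z ≠ 0 := (sub_pos.2 hz.2).ne'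
  have hG' : deriv (fun x => x ^ s * (1 - x) ^ (-Δ) * psum d x) z
      = z ^ s * (1 - z) ^ (-Δ) * (s / z + Δ / (1 - z)) * psum d z
        + z ^ s * (1 - z) ^ (-Δ) * psum (derivCoeff d) z :=
    ((hasDerivAt_rpow_mul_one_sub_rpow s Δ hz).mul (hasDerivAt_psum hd (hunit z hz))).deriv
  rw [bpzOperator, hG', deriv_deriv_mul_of_hasDerivAt isOpen_Ioo
    (fun x hx => hasDerivAt_rpow_mul_one_sub_rpow s Δ hx)
    (fun x hx => hasDerivAt_deriv_rpow_mul_one_sub_rpow s Δ hx)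
    (fun x hx => hasDerivAt_psum hd (hunit x hx))
    (fun x hx => hasDerivAt_psum hd.derivCoeff (hunit x hx)) hz]
  set P := z ^ s * (1 - z) ^ (-Δ)
  set F := psum d z
  set F' := psum (derivCoeff d) z
  linear_combination (norm := skip)
    P * (3 / 2) * (1 - z) * psum_hypergeometric_ode hd hrec (hunit z hz)
    - P * F' * (1 - z) / 2 * hc + P * F' * (1 - z) * z / 2 * hab
    + P * F * (1 - z) / (2 * z) * hs + P * F * (1 - z) / 2 * hab'
  field_simp
  ring

/-- Both Virasoro blocks of `⟨σσσσ⟩` satisfy the second-order BPZ equation. -/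
theorem stmt_15 (Δ : ℝ) (hΔ0 : 0 < Δ) (hΔ1 : Δ < 1/2) :
    ∀ z ∈ Set.Ioo (0 : ℝ) 1,
      ((3/2) * z * (z - 1)^2 * deriv (deriv (G1 Δ)) z
        + (z - 1) * ((2 - Δ)*z + 2*Δ - 1) * deriv (G1 Δ) z
        - (1/2) * Δ * (Δ + 1) * z * G1 Δ z = 0)
      ∧ ((3/2) * z * (z - 1)^2 * deriv (deriv (G2 Δ)) z
        + (z - 1) * ((2 - Δ)*z + 2*Δ - 1) * deriv (G2 Δ) z
        - (1/2) * Δ * (Δ + 1) * z * G2 Δ z = 0) := by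
  intro z hz
  have hG1 : G1 Δ = fun x => x ^ (0 : ℝ) * (1 - x) ^ (-Δ)
      * psum (hypergeomCoeff (-2*Δ) ((1 - 2*Δ)/3) ((2 - 4*Δ)/3)) x := by
    funext x
    simp only [G1, psum, hypergeomCoeff, Real.rpow_zero, one_mul]
  rw [hG1]
  constructor <;>
  refine bpzOperator_rpow_mul_one_sub_rpow_mul_psum
    (.of_abs_le (abs_hypergeomCoeff_le_one (abs_le.2 ⟨?_, ?_⟩) ?_ ?_))
    (hypergeomCoeff_succ _ _ fun n => (add_pos_of_pos_of_nonneg ?_ n.cast_nonneg).ne')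
    (by ring) (by ring) (by ring) (by ring) hz <;>
  linarith
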